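/- Let α, β, A, c be complex numbers and (a_n)_{n≥1}, (b_n)_{n≥1} complex sequences with |β| + |A| + Σ_{n≥1} n(|a_n| + |b_n|) ≤ k|α| for some 0 < k < 1. Define f(z) = αz + β·conj(z) + Σ_{n≥0} a_n z^{−n} + conj(Σ_{n≥1} b_n z^{−n}) + A·log|z| for |z| > 1. Then for all z₁, z₂ with |z₁| > 1, |z₂| > 1: (1−k)|α|·|z₁−z₂| ≤ |f(z₁)−f(z₂)| ≤ (1+k)|α|·|z₁−z₂|. -/

import Mathlib

/-!
Writing `f z = α z + P z`, every term of `P` is Lipschitz on `{|z| ≥ 1}`: `z ↦ z⁻¹` has constant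
`1` there and maps it into the closed unit disc, where `w ↦ w ^ n` has constant `n`; conjugation is
an isometry; and `log` has constant `1` on `[1, ∞)`. Hence `P` is Lipschitz with constant
`|β| + |A| + Σ n (|aₙ| + |bₙ|) ≤ k |α|`, and the triangle inequality around the linear part `α z`
gives both bounds.
-/

open ComplexConjugate

section PowerSeries

variable {R : Type*}

lemma norm_pow_le_one_of_norm_le_one [SeminormedRing R] [NormOneClass R] {w : R} (hw : ‖w‖ ≤ 1)
    (n : ℕ) : ‖w ^ n‖ ≤ 1 :=
  (norm_pow_le w n).trans (pow_le_one₀ (norm_nonneg _) hw)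

lemma norm_pow_sub_pow_le [SeminormedRing R] [NormOneClass R] {w₁ w₂ : R}
    (hw₁ : ‖w₁‖ ≤ 1) (hw₂ : ‖w₂‖ ≤ 1) (n : ℕ) :
    ‖w₁ ^ n - w₂ ^ n‖ ≤ n * ‖w₁ - w₂‖ := by
  induction n with
  | zero => simp
  | succ n ih =>
    have hpow := norm_pow_le_one_of_norm_le_one hw₁ n
    calc ‖w₁ ^ (n + 1) - w₂ ^ (n + 1)‖
        = ‖w₁ ^ n * (w₁ - w₂) + (w₁ ^ n - w₂ ^ n) * w₂‖ := by noncomm_ring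
      _ ≤ ‖w₁ ^ n‖ * ‖w₁ - w₂‖ + ‖w₁ ^ n - w₂ ^ n‖ * ‖w₂‖ :=
        (norm_add_le _ _).trans (add_le_add (norm_mul_le _ _) (norm_mul_le _ _))
      _ ≤ 1 * ‖w₁ - w₂‖ + (n * ‖w₁ - w₂‖) * 1 := by gcongr
      _ = (n + 1 : ℕ) * ‖w₁ - w₂‖ := by push_cast; ring

variable [NormedRing R] [NormOneClass R] [CompleteSpace R] {c : ℕ → R} {w w₁ w₂ : R}

lemma summable_mul_pow_succ (hc : Summable fun n : ℕ => ((n : ℝ) + 1) * ‖c n‖) (hw : ‖w‖ ≤ 1) :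
    Summable fun n => c n * w ^ (n + 1) := by
  refine hc.of_norm_bounded fun n => ?_
  calc ‖c n * w ^ (n + 1)‖ ≤ ‖c n‖ * 1 :=
        (norm_mul_le _ _).trans (by gcongr; exact norm_pow_le_one_of_norm_le_one hw _)
    _ ≤ ((n : ℝ) + 1) * ‖c n‖ := by
        rw [mul_one]
        exact le_mul_of_one_le_left (norm_nonneg _) (by linarith [n.cast_nonneg (α := ℝ)])

lemma norm_tsum_mul_pow_succ_sub_le (hc : Summable fun n : ℕ => ((n : ℝ) + 1) * ‖c n‖)
    (hw₁ : ‖w₁‖ ≤ 1) (hw₂ : ‖w₂‖ ≤ 1) :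
    ‖∑' n, c n * w₁ ^ (n + 1) - ∑' n, c n * w₂ ^ (n + 1)‖ ≤
      (∑' n : ℕ, ((n : ℝ) + 1) * ‖c n‖) * ‖w₁ - w₂‖ := by
  rw [← (summable_mul_pow_succ hc hw₁).tsum_sub (summable_mul_pow_succ hc hw₂), ← tsum_mul_right]
  refine tsum_of_norm_bounded (hc.mul_right _).hasSum fun n => ?_
  calc ‖c n * w₁ ^ (n + 1) - c n * w₂ ^ (n + 1)‖ = ‖c n * (w₁ ^ (n + 1) - w₂ ^ (n + 1))‖ := by
        rw [mul_sub]
    _ ≤ ‖c n‖ * ((n + 1 : ℕ) * ‖w₁ - w₂‖) :=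
        (norm_mul_le _ _).trans (by gcongr; exact norm_pow_sub_pow_le hw₁ hw₂ _)
    _ = ((n : ℝ) + 1) * ‖c n‖ * ‖w₁ - w₂‖ := by push_cast; ring

end PowerSeries

lemma norm_inv_sub_inv_le {K : Type*} [NormedDivisionRing K] {z₁ z₂ : K}
    (h₁ : 1 ≤ ‖z₁‖) (h₂ : 1 ≤ ‖z₂‖) : ‖z₁⁻¹ - z₂⁻¹‖ ≤ ‖z₁ - z₂‖ := by
  have hz₁ : z₁ ≠ 0 := norm_pos_iff.mp (zero_lt_one.trans_le h₁)
  have hz₂ : z₂ ≠ 0 := norm_pos_iff.mp (zero_lt_one.trans_le h₂)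
  rw [inv_sub_inv' hz₁ hz₂, norm_mul, norm_mul, norm_inv, norm_inv, norm_sub_rev z₂]
  calc ‖z₁‖⁻¹ * ‖z₁ - z₂‖ * ‖z₂‖⁻¹ ≤ 1 * ‖z₁ - z₂‖ * 1 := by
        gcongr
        exacts [inv_le_one_of_one_le₀ h₁, inv_le_one_of_one_le₀ h₂]
    _ = ‖z₁ - z₂‖ := by ring

lemma norm_inv_le_one_of_one_le_norm {K : Type*} [NormedDivisionRing K] {z : K} (h : 1 ≤ ‖z‖) :
    ‖z⁻¹‖ ≤ 1 :=
  (norm_inv z).trans_le (inv_le_one_of_one_le₀ h)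

lemma zpow_neg_natCast_add_one {K : Type*} [DivisionRing K] (z : K) (n : ℕ) :
    z ^ (-((n : ℤ) + 1)) = z⁻¹ ^ (n + 1) := by
  rw [inv_pow, ← zpow_natCast, ← zpow_neg]
  push_cast
  rfl

namespace Real

lemma log_sub_log_le_abs_sub {x y : ℝ} (hx : 0 < x) (hy : 1 ≤ y) : log x - log y ≤ |x - y| := by
  have hy0 : 0 < y := zero_lt_one.trans_le hy
  calc log x - log y = log (x / y) := (log_div hx.ne' hy0.ne').symm
    _ ≤ x / y - 1 := log_le_sub_one_of_pos (div_pos hx hy0)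
    _ = (x - y) / y := by field_simp
    _ ≤ |x - y| / y := by gcongr; exact le_abs_self _
    _ ≤ |x - y| := div_le_self (abs_nonneg _) hy

lemma abs_log_sub_log_le {x y : ℝ} (hx : 1 ≤ x) (hy : 1 ≤ y) : |log x - log y| ≤ |x - y| :=
  abs_sub_le_iff.mpr ⟨log_sub_log_le_abs_sub (zero_lt_one.trans_le hx) hy,
    abs_sub_comm x y ▸ log_sub_log_le_abs_sub (zero_lt_one.trans_le hy) hx⟩

end Real

section InversePowerSeries

variable {K : Type*} [NormedDivisionRing K] [CompleteSpace K] {c : ℕ → K} {z₁ z₂ : K}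

lemma norm_tsum_mul_zpow_neg_succ_sub_le (hc : Summable fun n : ℕ => ((n : ℝ) + 1) * ‖c n‖)
    (h₁ : 1 ≤ ‖z₁‖) (h₂ : 1 ≤ ‖z₂‖) :
    ‖∑' n : ℕ, c n * z₁ ^ (-((n : ℤ) + 1)) - ∑' n : ℕ, c n * z₂ ^ (-((n : ℤ) + 1))‖ ≤
      (∑' n : ℕ, ((n : ℝ) + 1) * ‖c n‖) * ‖z₁ - z₂‖ := by
  simp only [zpow_neg_natCast_add_one]
  have hw₁ := norm_inv_le_one_of_one_le_norm h₁
  have hw₂ := norm_inv_le_one_of_one_le_norm h₂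
  refine (norm_tsum_mul_pow_succ_sub_le hc hw₁ hw₂).trans ?_
  gcongr
  exact norm_inv_sub_inv_le h₁ h₂

lemma norm_tsum_mul_zpow_neg_sub_le (hc : Summable fun n : ℕ => ((n : ℝ) + 1) * ‖c (n + 1)‖)
    (h₁ : 1 ≤ ‖z₁‖) (h₂ : 1 ≤ ‖z₂‖) :
    ‖∑' n : ℕ, c n * z₁ ^ (-(n : ℤ)) - ∑' n : ℕ, c n * z₂ ^ (-(n : ℤ))‖ ≤
      (∑' n : ℕ, ((n : ℝ) + 1) * ‖c (n + 1)‖) * ‖z₁ - z₂‖ := by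
  have hsplit : ∀ z : K, 1 ≤ ‖z‖ → ∑' n : ℕ, c n * z ^ (-(n : ℤ)) =
      c 0 + ∑' n : ℕ, c (n + 1) * z ^ (-((n : ℤ) + 1)) := fun z hz => by
    have hsum := summable_mul_pow_succ hc (norm_inv_le_one_of_one_le_norm hz)
    simp only [← zpow_neg_natCast_add_one] at hsum
    rw [tsum_eq_zero_add' (by simpa using hsum)]
    simp
  rw [hsplit z₁ h₁, hsplit z₂ h₂, add_sub_add_left_eq_sub]
  exact norm_tsum_mul_zpow_neg_succ_sub_le hc h₁ h₂

end InversePowerSeries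

/-- The terms of `f` other than `α z`. The series in `a` starts at `n = 0` (with the constant term
`a 0`), whereas `b` enters only through `b (n + 1)`. -/
noncomputable def harmonicPerturbation (β A : ℂ) (a b : ℕ → ℂ) (z : ℂ) : ℂ :=
  β * conj z + (∑' n : ℕ, a n * z ^ (-(n : ℤ))) +
    conj (∑' n : ℕ, b (n + 1) * z ^ (-((n : ℤ) + 1))) + A * Real.log ‖z‖

lemma norm_harmonicPerturbation_sub_le (β A : ℂ) {a b : ℕ → ℂ}
    (hab : Summable fun n : ℕ => ((n : ℝ) + 1) * (‖a (n + 1)‖ + ‖b (n + 1)‖))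
    {z₁ z₂ : ℂ} (h₁ : 1 ≤ ‖z₁‖) (h₂ : 1 ≤ ‖z₂‖) :
    ‖harmonicPerturbation β A a b z₁ - harmonicPerturbation β A a b z₂‖ ≤
      (‖β‖ + ‖A‖ + ∑' n : ℕ, ((n : ℝ) + 1) * (‖a (n + 1)‖ + ‖b (n + 1)‖)) * ‖z₁ - z₂‖ := by
  have ha : Summable fun n : ℕ => ((n : ℝ) + 1) * ‖a (n + 1)‖ :=
    hab.of_nonneg_of_le (fun n => by positivity) fun n => by
      gcongr; exact le_add_of_nonneg_right (norm_nonneg _)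
  have hb : Summable fun n : ℕ => ((n : ℝ) + 1) * ‖b (n + 1)‖ :=
    hab.of_nonneg_of_le (fun n => by positivity) fun n => by
      gcongr; exact le_add_of_nonneg_left (norm_nonneg _)
  have hlog : ‖((Real.log ‖z₁‖ - Real.log ‖z₂‖ : ℝ) : ℂ)‖ ≤ ‖z₁ - z₂‖ := by
    rw [Complex.norm_real, Real.norm_eq_abs]
    exact (Real.abs_log_sub_log_le h₁ h₂).trans (abs_norm_sub_norm_le z₁ z₂)
  calc ‖harmonicPerturbation β A a b z₁ - harmonicPerturbation β A a b z₂‖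
      = ‖β * conj (z₁ - z₂) +
          (∑' n : ℕ, a n * z₁ ^ (-(n : ℤ)) - ∑' n : ℕ, a n * z₂ ^ (-(n : ℤ))) +
          conj (∑' n : ℕ, b (n + 1) * z₁ ^ (-((n : ℤ) + 1)) -
            ∑' n : ℕ, b (n + 1) * z₂ ^ (-((n : ℤ) + 1))) +
          A * ((Real.log ‖z₁‖ - Real.log ‖z₂‖ : ℝ) : ℂ)‖ := by
        simp only [harmonicPerturbation, map_sub]
        push_cast
        ring_nf
    _ ≤ ‖β‖ * ‖z₁ - z₂‖ + (∑' n : ℕ, ((n : ℝ) + 1) * ‖a (n + 1)‖) * ‖z₁ - z₂‖ +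
          (∑' n : ℕ, ((n : ℝ) + 1) * ‖b (n + 1)‖) * ‖z₁ - z₂‖ + ‖A‖ * ‖z₁ - z₂‖ := by
        refine norm_add₄_le.trans ?_
        simp only [norm_mul, Complex.norm_conj]
        gcongr
        exacts [norm_tsum_mul_zpow_neg_sub_le ha h₁ h₂,
          norm_tsum_mul_zpow_neg_succ_sub_le (c := fun n => b (n + 1)) hb h₁ h₂]
    _ = (‖β‖ + ‖A‖ + ∑' n : ℕ, ((n : ℝ) + 1) * (‖a (n + 1)‖ + ‖b (n + 1)‖)) * ‖z₁ - z₂‖ := by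
        simp only [mul_add, ha.tsum_add hb]
        ring

theorem stmt14_general (α β A : ℂ) (a b : ℕ → ℂ) (k : ℝ)
    (hsum : Summable fun n : ℕ => ((n : ℝ) + 1) *
      (‖a (n + 1)‖ + ‖b (n + 1)‖))
    (hcoef : ‖β‖ + ‖A‖ +
      (∑' n : ℕ, ((n : ℝ) + 1) * (‖a (n + 1)‖ + ‖b (n + 1)‖)) ≤
        k * ‖α‖)
    (f : ℂ → ℂ)
    (hf : ∀ z : ℂ, 1 < ‖z‖ →
      f z = α * z + β * (starRingEnd ℂ) z + (∑' n : ℕ, a n * z ^ (-(n : ℤ))) +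
        (starRingEnd ℂ) (∑' n : ℕ, b (n + 1) * z ^ (-((n : ℤ) + 1))) +
        A * Real.log ‖z‖) :
    ∀ z₁ z₂ : ℂ, 1 < ‖z₁‖ → 1 < ‖z₂‖ →
      (1 - k) * ‖α‖ * ‖z₁ - z₂‖ ≤ ‖f z₁ - f z₂‖ ∧
        ‖f z₁ - f z₂‖ ≤ (1 + k) * ‖α‖ * ‖z₁ - z₂‖ := by
  intro z₁ z₂ h₁ h₂
  have hsplit : ∀ z : ℂ, 1 < ‖z‖ → f z = α * z + harmonicPerturbation β A a b z := fun z hz => by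
    rw [hf z hz, harmonicPerturbation]
    ring
  have hdev : ‖(f z₁ - f z₂) - α * (z₁ - z₂)‖ ≤ k * ‖α‖ * ‖z₁ - z₂‖ :=
    calc ‖(f z₁ - f z₂) - α * (z₁ - z₂)‖
        = ‖harmonicPerturbation β A a b z₁ - harmonicPerturbation β A a b z₂‖ := by
          rw [hsplit z₁ h₁, hsplit z₂ h₂]
          ring_nf
      _ ≤ _ := norm_harmonicPerturbation_sub_le β A hsum h₁.le h₂.le
      _ ≤ k * ‖α‖ * ‖z₁ - z₂‖ := by gcongr
  obtain ⟨hlower, hupper⟩ := abs_le.mp ((abs_norm_sub_norm_le _ _).trans hdev)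
  rw [norm_mul] at hlower hupper
  exact ⟨by linarith, by linarith⟩

theorem stmt14 (α β A : ℂ) (a b : ℕ → ℂ) (k : ℝ) (hk0 : 0 < k) (hk1 : k < 1)
    (hsum : Summable fun n : ℕ => ((n : ℝ) + 1) *
      (‖a (n + 1)‖ + ‖b (n + 1)‖))
    (hcoef : ‖β‖ + ‖A‖ +
      (∑' n : ℕ, ((n : ℝ) + 1) * (‖a (n + 1)‖ + ‖b (n + 1)‖)) ≤
        k * ‖α‖)
    (f : ℂ → ℂ)
    (hf : ∀ z : ℂ, 1 < ‖z‖ →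
      f z = α * z + β * (starRingEnd ℂ) z + (∑' n : ℕ, a n * z ^ (-(n : ℤ))) +
        (starRingEnd ℂ) (∑' n : ℕ, b (n + 1) * z ^ (-((n : ℤ) + 1))) +
        A * Real.log ‖z‖) :
    ∀ z₁ z₂ : ℂ, 1 < ‖z₁‖ → 1 < ‖z₂‖ →
      (1 - k) * ‖α‖ * ‖z₁ - z₂‖ ≤ ‖f z₁ - f z₂‖ ∧
        ‖f z₁ - f z₂‖ ≤ (1 + k) * ‖α‖ * ‖z₁ - z₂‖ :=
  stmt14_general α β A a b k hsum hcoef f hf
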